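/- Fix Φ ∈ (0, π) and for x, y > 0 define the hyperbolic inner angle θ(x, y) = arccos((cosh l(x,y) · cosh x − cosh y)/(sinh l(x,y) · sinh x)), where l(x, y) = arcosh(cosh x cosh y + sinh x sinh y cos Φ). Then for each fixed y > 0 the function x ↦ θ(x, y) is strictly decreasing on (0, ∞), and for each fixed x > 0 the function y ↦ θ(x, y) is strictly increasing on (0, ∞). -/

import Mathlib

/-- The inverse of `cosh` on `[1, ∞)`. -/
noncomputable def arcosh (x : ℝ) : ℝ := Real.log (x + Real.sqrt (x ^ 2 - 1))

/-- The hyperbolic edge length of the two-circle configuration with radii `x, y` and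
exterior intersection angle `Φ`. -/
noncomputable def hypLen (Φ x y : ℝ) : ℝ :=
  arcosh (Real.cosh x * Real.cosh y + Real.sinh x * Real.sinh y * Real.cos Φ)

/-- The hyperbolic inner angle at the vertex of radius `x` in the two-circle configuration
with radii `x, y` and exterior intersection angle `Φ`. -/
noncomputable def thetaH (Φ x y : ℝ) : ℝ :=
  Real.arccos ((Real.cosh (hypLen Φ x y) * Real.cosh x - Real.cosh y) /
    (Real.sinh (hypLen Φ x y) * Real.sinh x))

/-! Substituting the closed forms of `cosh l` and `sinh l` turns `cos θ` into `A / √(A² + B²)`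
with `A = sinh x cosh y + cos Φ cosh x sinh y` and `B = sin Φ sinh y`, so
`θ = π/2 - arctan (A / B)`: this is the cotangent four-part formula
`cot θ = (sinh x coth y + cos Φ cosh x) / sin Φ`. Its right-hand side increases strictly in `x`,
because `A = sinh (x - y) + (1 + cos Φ) sinh y cosh x`, and decreases strictly in `y`, because
`coth` does. -/

open Real Set

theorem arccos_div_sqrt_sq_add_sq {a b : ℝ} (hb : 0 < b) :
    arccos (a / √(a ^ 2 + b ^ 2)) = π / 2 - arctan (a / b) := by
  have hsqrt : √(1 + (a / b) ^ 2) = √(a ^ 2 + b ^ 2) / b := by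
    rw [show 1 + (a / b) ^ 2 = (a ^ 2 + b ^ 2) / b ^ 2 by field_simp; ring,
      sqrt_div' _ (sq_nonneg b), sqrt_sq hb.le]
  rw [arccos_eq_pi_div_two_sub_arcsin, arctan_eq_arcsin, hsqrt, div_div_div_cancel_right₀ hb.ne']

theorem strictAntiOn_cosh_div_sinh : StrictAntiOn (fun y => cosh y / sinh y) (Ioi 0) := by
  intro a ha b hb hab
  rw [div_lt_div_iff₀ (sinh_pos_iff.2 hb) (sinh_pos_iff.2 ha), ← sub_pos]
  have := sinh_pos_iff.2 (sub_pos.2 hab)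
  rw [sinh_sub] at this
  linarith

section TwoCircles

variable {Φ c x y : ℝ}

theorem one_le_cosh_mul_cosh_add_sinh_mul_sinh_mul (hc : -1 ≤ c) (hx : 0 ≤ x) (hy : 0 ≤ y) :
    1 ≤ cosh x * cosh y + sinh x * sinh y * c := by
  have hsx := sinh_nonneg_iff.2 hx
  have hsy := sinh_nonneg_iff.2 hy
  have hc' : 0 ≤ 1 + c := by linarith
  have hsplit : cosh x * cosh y + sinh x * sinh y * c
      = cosh (x - y) + (1 + c) * sinh x * sinh y := by
    rw [cosh_sub]; ring
  rw [hsplit]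
  linarith [one_le_cosh (x - y), mul_nonneg (mul_nonneg hc' hsx) hsy]

theorem cosh_hypLen (hx : 0 ≤ x) (hy : 0 ≤ y) :
    cosh (hypLen Φ x y) = cosh x * cosh y + sinh x * sinh y * cos Φ :=
  cosh_arcosh (one_le_cosh_mul_cosh_add_sinh_mul_sinh_mul (neg_one_le_cos Φ) hx hy)

theorem sinh_hypLen (hx : 0 ≤ x) (hy : 0 ≤ y) :
    sinh (hypLen Φ x y) =
      √((sinh x * cosh y + cos Φ * cosh x * sinh y) ^ 2 + (sin Φ * sinh y) ^ 2) := by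
  rw [hypLen, show _root_.arcosh = Real.arcosh from rfl,
    sinh_arcosh (one_le_cosh_mul_cosh_add_sinh_mul_sinh_mul (neg_one_le_cos Φ) hx hy)]
  congr 1
  linear_combination (cosh y ^ 2 - cos Φ ^ 2 * sinh y ^ 2) * cosh_sq x + cosh_sq y
    - sinh y ^ 2 * sin_sq_add_cos_sq Φ

theorem thetaH_eq_pi_div_two_sub_arctan (hΦ : 0 < sin Φ) (hx : 0 < x) (hy : 0 < y) :
    thetaH Φ x y =
      π / 2 - arctan ((sinh x * cosh y + cos Φ * cosh x * sinh y) / (sin Φ * sinh y)) := by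
  have hB : 0 < sin Φ * sinh y := mul_pos hΦ (sinh_pos_iff.2 hy)
  rw [← arccos_div_sqrt_sq_add_sq hB, thetaH, cosh_hypLen hx.le hy.le, sinh_hypLen hx.le hy.le,
    mul_comm _ (sinh x), ← div_div]
  congr 2
  rw [div_eq_iff (sinh_pos_iff.2 hx).ne']
  linear_combination cosh y * cosh_sq x

theorem strictMonoOn_sinh_mul_cosh_add_mul_cosh_mul_sinh (hc : -1 ≤ c) (hy : 0 ≤ y) :
    StrictMonoOn (fun x => sinh x * cosh y + c * cosh x * sinh y) (Ici 0) := by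
  intro a ha b hb hab
  have hsplit : ∀ x, sinh x * cosh y + c * cosh x * sinh y
      = sinh (x - y) + (1 + c) * sinh y * cosh x := fun x => by rw [sinh_sub]; ring
  have hcoef : 0 ≤ (1 + c) * sinh y := mul_nonneg (by linarith) (sinh_nonneg_iff.2 hy)
  simp only [hsplit]
  exact add_lt_add_of_lt_of_le (sinh_strictMono (by linarith))
    (mul_le_mul_of_nonneg_left (cosh_strictMonoOn.monotoneOn ha hb hab.le) hcoef)

end TwoCircles

/-- For a fixed weight `Φ ∈ (0, π)`, the hyperbolic inner angle `θ(x, y)` is strictly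
decreasing in `x` on `(0, ∞)` for each fixed `y > 0`, and strictly increasing in `y` on
`(0, ∞)` for each fixed `x > 0`. -/
theorem hyperbolic_angle_monotone (Φ : ℝ) (hΦ : Φ ∈ Set.Ioo 0 Real.pi) :
    (∀ y : ℝ, 0 < y → StrictAntiOn (fun x => thetaH Φ x y) (Set.Ioi 0)) ∧
    (∀ x : ℝ, 0 < x → StrictMonoOn (fun y => thetaH Φ x y) (Set.Ioi 0)) := by
  have hsin : 0 < sin Φ := sin_pos_of_pos_of_lt_pi hΦ.1 hΦ.2
  have hcos : -1 < cos Φ := by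
    simpa using cos_lt_cos_of_nonneg_of_le_pi hΦ.1.le le_rfl hΦ.2
  constructor
  · intro y hy x₁ hx₁ x₂ hx₂ hlt
    simp only [thetaH_eq_pi_div_two_sub_arctan hsin hx₁ hy,
      thetaH_eq_pi_div_two_sub_arctan hsin hx₂ hy]
    refine sub_lt_sub_left (arctan_strictMono (div_lt_div_of_pos_right ?_ (by positivity))) _
    exact strictMonoOn_sinh_mul_cosh_add_mul_cosh_mul_sinh hcos.le hy.le
      (Ioi_subset_Ici_self hx₁) (Ioi_subset_Ici_self hx₂) hlt
  · intro x hx y₁ hy₁ y₂ hy₂ hlt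
    have hcoth : ∀ y : ℝ, 0 < y →
        (sinh x * cosh y + cos Φ * cosh x * sinh y) / (sin Φ * sinh y)
          = (sinh x * (cosh y / sinh y) + cos Φ * cosh x) / sin Φ := fun y hy => by
      field_simp [(sinh_pos_iff.2 hy).ne']
    simp only [thetaH_eq_pi_div_two_sub_arctan hsin hx hy₁,
      thetaH_eq_pi_div_two_sub_arctan hsin hx hy₂, hcoth y₁ hy₁, hcoth y₂ hy₂]
    refine sub_lt_sub_left (arctan_strictMono (div_lt_div_of_pos_right ?_ hsin)) _
    gcongr ?_ + _
    exact mul_lt_mul_of_pos_left (strictAntiOn_cosh_div_sinh hy₁ hy₂ hlt) (sinh_pos_iff.2 hx)
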